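/- arXiv:q-alg/9505019 — 6 statements merged into one kernel-verified Lean document; each statement's English description precedes it below -/
import Mathlib

section
/- Let b, c be integers, N a natural number, and z₁, z₂ arbitrary complex numbers. Then the finite polynomial identity ∑_{k=0}^{N} C(−b−1, k) · C(−c−1, N−k) · z₁^k · z₂^{N−k} = ∑_{k=0}^{N} C(k−N−b−c−2, k) · C(−b−1, N−k) · z₂^k · (z₁−z₂)^{N−k} holds in ℂ. -/
open Finset Polynomial

noncomputable def gb (x : ℂ) (j : ℕ) : ℂ :=
  (∏ i ∈ Finset.range j, (x - (i : ℂ))) / (Nat.factorial j : ℂ)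

lemma prod_nat_cast (n k : ℕ) :
    (∏ i ∈ range k, ((n : ℂ) - (i : ℂ))) = (n.descFactorial k : ℂ) := by
  rcases le_or_gt k n with h | h
  · rw [Nat.descFactorial_eq_prod_range, Nat.cast_prod]
    refine Finset.prod_congr rfl fun i hi => ?_
    rw [Nat.cast_sub]
    exact le_of_lt (lt_of_lt_of_le (Finset.mem_range.mp hi) h)
  · rw [Nat.descFactorial_eq_zero_iff_lt.mpr h, Nat.cast_zero]
    refine Finset.prod_eq_zero (Finset.mem_range.mpr h) ?_
    simp

lemma gb_nat (n k : ℕ) : gb (n : ℂ) k = (n.choose k : ℂ) := by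
  rw [gb, prod_nat_cast, Nat.descFactorial_eq_factorial_mul_choose]
  push_cast
  rw [mul_comm, mul_div_assoc, div_self (by exact_mod_cast k.factorial_ne_zero), mul_one]

lemma gb_neg (x : ℂ) (k : ℕ) : gb ((k : ℂ) - 1 - x) k = (-1 : ℂ) ^ k * gb x k := by
  have h : ∀ j ∈ range k, x - ((k - 1 - j : ℕ) : ℂ) = (-1) * ((k : ℂ) - 1 - x - j) := by
    intro j hj
    have hj' := Finset.mem_range.mp hj
    have hc : ((k - 1 - j : ℕ) : ℂ) = (k : ℂ) - 1 - j := by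
      have h1 : k - 1 - j = k - (1 + j) := by omega
      rw [h1, Nat.cast_sub (by omega)]
      push_cast; ring
    rw [hc]; ring
  have hp : ∏ i ∈ range k, (x - (i : ℂ)) = (-1 : ℂ) ^ k * ∏ i ∈ range k, ((k : ℂ) - 1 - x - i) := by
    rw [← Finset.prod_range_reflect (fun i => (x - (i : ℂ))) k, Finset.prod_congr rfl h,
      Finset.prod_mul_distrib, Finset.prod_const, Finset.card_range]
  rw [gb, gb, hp,
    show (-1 : ℂ) ^ k * ((-1 : ℂ) ^ k * (∏ i ∈ range k, ((k : ℂ) - 1 - x - ↑i)) / (k.factorial : ℂ))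
      = (((-1 : ℂ) ^ k * (-1 : ℂ) ^ k) * (∏ i ∈ range k, ((k : ℂ) - 1 - x - ↑i))) / (k.factorial : ℂ)
      from by ring,
    ← pow_add, Even.neg_one_pow ⟨k, rfl⟩, one_mul]

lemma gb_trinomial (x : ℂ) {j m : ℕ} (h : j ≤ m) :
    gb x m * (m.choose j : ℂ) = gb x j * gb (x - j) (m - j) := by
  obtain ⟨r, rfl⟩ : ∃ r, m = j + r := ⟨m - j, by omega⟩
  have hr : j + r - j = r := by omega
  rw [hr, gb, gb, gb, Finset.prod_range_add, Nat.cast_choose ℂ h, hr]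
  have hterm : ∀ i ∈ range r, x - ((j + i : ℕ) : ℂ) = (x - j) - i := by
    intro i _; push_cast; ring
  rw [Finset.prod_congr rfl hterm]
  have hj : ((j.factorial : ℂ)) ≠ 0 := by exact_mod_cast j.factorial_ne_zero
  have hrf : ((r.factorial : ℂ)) ≠ 0 := by exact_mod_cast r.factorial_ne_zero
  have hjr : (((j + r).factorial : ℂ)) ≠ 0 := by exact_mod_cast (j + r).factorial_ne_zero
  field_simp

lemma vander_nat (m n M : ℕ) :
    ∑ k ∈ range (M + 1), gb (m : ℂ) k * gb (n : ℂ) (M - k) = gb ((m : ℂ) + n) M := by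
  have : ((m : ℂ) + n) = ((m + n : ℕ) : ℂ) := by push_cast; ring
  rw [this, gb_nat]
  have h := Nat.add_choose_eq m n M
  rw [Finset.Nat.sum_antidiagonal_eq_sum_range_succ_mk] at h
  rw [h]
  push_cast
  exact Finset.sum_congr rfl fun k _ => by rw [gb_nat, gb_nat]

noncomputable def gp (k : ℕ) : Polynomial ℂ :=
  Polynomial.C ((k.factorial : ℂ)⁻¹) * ∏ i ∈ range k, (X - C (i : ℂ))

lemma gp_eval (x : ℂ) (k : ℕ) : (gp k).eval x = gb x k := by
  rw [gp, gb, eval_mul, eval_C, eval_prod, div_eq_inv_mul]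
  congr 1
  exact Finset.prod_congr rfl fun i _ => by simp

lemma nat_cast_infinite : Set.Infinite { x : ℂ | ∃ n : ℕ, (n : ℂ) = x } := by
  exact Set.infinite_of_injective_forall_mem (f := fun n : ℕ => (n : ℂ))
    Nat.cast_injective (fun n => ⟨n, rfl⟩)

lemma vander_left (u : ℂ) (n M : ℕ) :
    ∑ k ∈ range (M + 1), gb u k * gb (n : ℂ) (M - k) = gb (u + n) M := by
  have key : (∑ k ∈ range (M + 1), gp k * C (gb (n : ℂ) (M - k)))
      = (gp M).comp (X + C (n : ℂ)) := by
    apply Polynomial.eq_of_infinite_eval_eq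
    apply Set.Infinite.mono _ nat_cast_infinite
    rintro x ⟨m, rfl⟩
    simp only [Set.mem_setOf_eq, eval_finset_sum, eval_mul, eval_C, eval_comp, eval_add, eval_X,
      gp_eval]
    exact vander_nat m n M
  have := congrArg (Polynomial.eval u) key
  simpa only [eval_finset_sum, eval_mul, eval_C, eval_comp, eval_add, eval_X, gp_eval] using this

lemma vander (u v : ℂ) (M : ℕ) :
    ∑ k ∈ range (M + 1), gb u k * gb v (M - k) = gb (u + v) M := by
  have key : (∑ k ∈ range (M + 1), C (gb u k) * gp (M - k))
      = (gp M).comp (C u + X) := by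
    apply Polynomial.eq_of_infinite_eval_eq
    apply Set.Infinite.mono _ nat_cast_infinite
    rintro x ⟨m, rfl⟩
    simp only [Set.mem_setOf_eq, eval_finset_sum, eval_mul, eval_C, eval_comp, eval_add, eval_X,
      gp_eval]
    exact vander_left u m M
  have := congrArg (Polynomial.eval v) key
  simpa only [eval_finset_sum, eval_mul, eval_C, eval_comp, eval_add, eval_X, gp_eval] using this

lemma coeff_key (x y : ℂ) (j M : ℕ) :
    ∑ k ∈ range (M + 1),
      (-1 : ℂ) ^ (M - k) * (gb (x + y + (k : ℂ) - ((j + M : ℕ) : ℂ)) k * gb x (j + M - k))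
        * (((j + M - k).choose j : ℕ) : ℂ) = gb x j * gb y M := by
  have hstep : ∀ k ∈ range (M + 1),
      (-1 : ℂ) ^ (M - k) * (gb (x + y + (k : ℂ) - ((j + M : ℕ) : ℂ)) k * gb x (j + M - k))
        * (((j + M - k).choose j : ℕ) : ℂ)
      = ((-1 : ℂ) ^ M * gb x j) *
          (gb ((M : ℂ) + j - 1 - x - y) k * gb (x - j) (M - k)) := by
    intro k hk
    have hk' : k ≤ M := Nat.lt_succ_iff.mp (Finset.mem_range.mp hk)
    have hA : gb (x + y + (k : ℂ) - ((j + M : ℕ) : ℂ)) k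
        = (-1 : ℂ) ^ k * gb ((M : ℂ) + j - 1 - x - y) k := by
      have h0 := gb_neg (x + y + (k : ℂ) - ((j + M : ℕ) : ℂ)) k
      rw [show ((k : ℂ) - 1 - (x + y + (k : ℂ) - ((j + M : ℕ) : ℂ)))
          = (M : ℂ) + j - 1 - x - y from by push_cast; ring] at h0
      rw [h0, ← mul_assoc, ← pow_add, Even.neg_one_pow ⟨k, rfl⟩, one_mul]
    have hB := gb_trinomial x (show j ≤ j + M - k by omega)
    rw [show j + M - k - j = M - k from by omega] at hB
    have hs : (-1 : ℂ) ^ (M - k) * (-1 : ℂ) ^ k = (-1 : ℂ) ^ M := by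
      rw [← pow_add, Nat.sub_add_cancel hk']
    rw [show (-1 : ℂ) ^ (M - k) * (gb (x + y + (k : ℂ) - ((j + M : ℕ) : ℂ)) k
          * gb x (j + M - k)) * (((j + M - k).choose j : ℕ) : ℂ)
        = (-1 : ℂ) ^ (M - k) * gb (x + y + (k : ℂ) - ((j + M : ℕ) : ℂ)) k
          * (gb x (j + M - k) * (((j + M - k).choose j : ℕ) : ℂ)) from by ring, hB, hA]
    linear_combination (gb ((M : ℂ) + j - 1 - x - y) k * gb x j * gb (x - j) (M - k)) * hs
  rw [Finset.sum_congr rfl hstep, ← Finset.mul_sum, vander,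
    show ((M : ℂ) + j - 1 - x - y) + (x - j) = (M : ℂ) - 1 - y from by ring, gb_neg]
  have h1 : (-1 : ℂ) ^ M * (-1 : ℂ) ^ M = 1 := by
    rw [← pow_add]; exact Even.neg_one_pow ⟨M, rfl⟩
  linear_combination (gb x j * gb y M) * h1

/-- The generalized binomial coefficient `C(n, j) = n(n-1)⋯(n-j+1)/j!`,
regarded as a complex number (equal to `1` when `j = 0`). -/
noncomputable def cbinom (n : ℤ) (j : ℕ) : ℂ :=
  (∏ i ∈ Finset.range j, ((n : ℂ) - (i : ℂ))) / (Nat.factorial j : ℂ)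

theorem delta_identity_coefficients_14_8 (b c : ℤ) (N : ℕ) (z₁ z₂ : ℂ) :
    ∑ k ∈ Finset.range (N + 1),
        cbinom (-b - 1) k * cbinom (-c - 1) (N - k) * z₁ ^ k * z₂ ^ (N - k)
      = ∑ k ∈ Finset.range (N + 1),
        cbinom ((k : ℤ) - (N : ℤ) - b - c - 2) k * cbinom (-b - 1) (N - k)
          * z₂ ^ k * (z₁ - z₂) ^ (N - k) := by
  have hcb : ∀ (n : ℤ) (k : ℕ), cbinom n k = gb (n : ℂ) k := fun n k => rfl
  simp only [hcb]
  set x : ℂ := ((-b - 1 : ℤ) : ℂ) with hxdef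
  set y : ℂ := ((-c - 1 : ℤ) : ℂ) with hydef
  have harg : ∀ k : ℕ, (((k : ℤ) - (N : ℤ) - b - c - 2 : ℤ) : ℂ)
      = x + y + (k : ℂ) - ((N : ℕ) : ℂ) := by
    intro k; rw [hxdef, hydef]; push_cast; ring
  have expand : ∀ k ∈ range (N + 1), (z₁ - z₂) ^ (N - k)
      = ∑ j ∈ range (N + 1), z₁ ^ j * (-z₂) ^ (N - k - j) * (((N - k).choose j : ℕ) : ℂ) := by
    intro k hk
    rw [sub_eq_add_neg, add_pow]
    refine Finset.sum_subset (Finset.range_subset_range.mpr (by omega)) ?_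
    intro j hj hj2
    simp only [Finset.mem_range] at hj hj2
    rw [Nat.choose_eq_zero_of_lt (by omega)]
    simp
  refine Eq.symm ?_
  calc
    ∑ k ∈ range (N + 1), gb (((k : ℤ) - (N : ℤ) - b - c - 2 : ℤ) : ℂ) k * gb x (N - k)
        * z₂ ^ k * (z₁ - z₂) ^ (N - k)
      = ∑ k ∈ range (N + 1), ∑ j ∈ range (N + 1),
          gb (x + y + (k : ℂ) - ((N : ℕ) : ℂ)) k * gb x (N - k) * z₂ ^ k
            * (z₁ ^ j * (-z₂) ^ (N - k - j) * (((N - k).choose j : ℕ) : ℂ)) := by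
        refine Finset.sum_congr rfl fun k hk => ?_
        rw [harg, expand k hk, Finset.mul_sum]
    _ = ∑ j ∈ range (N + 1), ∑ k ∈ range (N + 1),
          gb (x + y + (k : ℂ) - ((N : ℕ) : ℂ)) k * gb x (N - k) * z₂ ^ k
            * (z₁ ^ j * (-z₂) ^ (N - k - j) * (((N - k).choose j : ℕ) : ℂ)) :=
        Finset.sum_comm
    _ = ∑ j ∈ range (N + 1), gb x j * gb y (N - j) * z₁ ^ j * z₂ ^ (N - j) := by
        refine Finset.sum_congr rfl fun j hj => ?_
        have hjN : j ≤ N := Nat.lt_succ_iff.mp (Finset.mem_range.mp hj)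
        obtain ⟨M, rfl⟩ : ∃ M, N = j + M := ⟨N - j, by omega⟩
        have shrink : ∑ k ∈ range (j + M + 1),
            gb (x + y + (k : ℂ) - ((j + M : ℕ) : ℂ)) k * gb x (j + M - k) * z₂ ^ k
              * (z₁ ^ j * (-z₂) ^ (j + M - k - j) * (((j + M - k).choose j : ℕ) : ℂ))
            = ∑ k ∈ range (M + 1),
            gb (x + y + (k : ℂ) - ((j + M : ℕ) : ℂ)) k * gb x (j + M - k) * z₂ ^ k
              * (z₁ ^ j * (-z₂) ^ (j + M - k - j) * (((j + M - k).choose j : ℕ) : ℂ)) := by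
          refine (Finset.sum_subset (Finset.range_subset_range.mpr (by omega)) ?_).symm
          intro k hk hk2
          simp only [Finset.mem_range] at hk hk2
          rw [Nat.choose_eq_zero_of_lt (by omega)]
          simp
        rw [shrink]
        have hterm : ∀ k ∈ range (M + 1),
            gb (x + y + (k : ℂ) - ((j + M : ℕ) : ℂ)) k * gb x (j + M - k) * z₂ ^ k
              * (z₁ ^ j * (-z₂) ^ (j + M - k - j) * (((j + M - k).choose j : ℕ) : ℂ))
            = ((-1 : ℂ) ^ (M - k) * (gb (x + y + (k : ℂ) - ((j + M : ℕ) : ℂ)) k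
                * gb x (j + M - k)) * (((j + M - k).choose j : ℕ) : ℂ))
              * (z₁ ^ j * z₂ ^ M) := by
          intro k hk
          have hk' : k ≤ M := Nat.lt_succ_iff.mp (Finset.mem_range.mp hk)
          have hz : z₂ ^ k * z₂ ^ (M - k) = z₂ ^ M := by
            rw [← pow_add]; congr 1; omega
          rw [show j + M - k - j = M - k from by omega, neg_pow]
          linear_combination (gb (x + y + (k : ℂ) - ((j + M : ℕ) : ℂ)) k * gb x (j + M - k)
            * (((j + M - k).choose j : ℕ) : ℂ) * z₁ ^ j * (-1 : ℂ) ^ (M - k)) * hz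
        rw [Finset.sum_congr rfl hterm, ← Finset.sum_mul, coeff_key x y j M,
          show j + M - j = M from by omega]
        ring
end

section
/- Let r, t be integers, s a natural number, and z₁, z₂ nonzero complex numbers with |z₁| > |z₂| > 0. Then the series ∑_{l=0}^{∞} (−1)^{s+l} · C(s+t+l+1−r, s) · C(−t−1, l) · z₁^{r−s−t−l−2} · z₂^{l} converges absolutely, and its sum equals ∑_{j=0}^{s} C(r−1, j) · C(−t−1, s−j) · z₁^{r−1−j} · (z₁−z₂)^{−t−1−s+j}. (Note that |z₁| > |z₂| forces z₁ ≠ 0 and z₁ ≠ z₂, so all the integer powers appearing are defined.) -/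
open Finset

namespace Ring

variable {R : Type*} [CommRing R] [BinomialRing R]

theorem choose_mul_choose_sub_comm (b : R) (m l : ℕ) :
    choose b m * choose (b - m) l = choose b l * choose (b - l) m := by
  have hm := choose_smul_choose b (Nat.le_add_right m l)
  have hl := choose_smul_choose b (Nat.le_add_left l m)
  rw [add_tsub_cancel_left] at hm
  rw [add_tsub_cancel_right] at hl
  rw [← hm, ← hl, Nat.choose_symm_add]

theorem neg_one_pow_mul_choose_sub_one_sub (r : R) (n : ℕ) :
    (-1) ^ n * choose ((n : R) - 1 - r) n = choose r n := by
  rw [show (n : R) - 1 - r = -(r - n + 1) by ring, choose_neg,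
    show r - n + 1 + n - 1 = r by ring, Units.smul_def, Int.coe_negOnePow_natCast, zsmul_eq_mul]
  push_cast
  rw [← mul_assoc, ← mul_pow]
  simp

theorem sum_choose_mul_choose_mul_choose (a b : R) (s l : ℕ) :
    ∑ j ∈ range (s + 1), choose a j * choose b (s - j) * choose (b - s + j) l =
      (-1) ^ s * choose ((s : R) - 1 - (a + (b - l))) s * choose b l := by
  rw [neg_one_pow_mul_choose_sub_one_sub, add_choose_eq _ (Commute.all _ _),
    Nat.sum_antidiagonal_eq_sum_range_succ (fun i k => choose a i * choose (b - l) k), sum_mul]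
  refine sum_congr rfl fun j hj => ?_
  have hjs : j ≤ s := Nat.lt_succ_iff.mp (mem_range.mp hj)
  rw [show b - s + j = b - ((s - j : ℕ) : R) by push_cast [Nat.cast_sub hjs]; ring, mul_assoc,
    mul_assoc, choose_mul_choose_sub_comm, mul_comm (choose b l)]

end Ring

theorem ne_zero_of_norm_lt {E : Type*} [SeminormedAddGroup E] {z w : E} (h : ‖w‖ < ‖z‖) :
    z ≠ 0 :=
  ne_zero_of_norm_ne_zero ((norm_nonneg w).trans_lt h).ne'

theorem norm_div_lt_one_of_norm_lt {𝕜 : Type*} [NormedDivisionRing 𝕜] {z w : 𝕜}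
    (h : ‖w‖ < ‖z‖) : ‖w / z‖ < 1 := by
  rwa [norm_div, div_lt_one ((norm_nonneg w).trans_lt h)]

namespace Complex

theorem intCast_choose (m : ℤ) (n : ℕ) :
    ((Ring.choose m n : ℤ) : ℂ) = Ring.choose (m : ℂ) n := by
  simpa using Ring.map_choose (Int.castRingHom ℂ) m n

theorem mem_eball_zero_one {x : ℂ} (hx : ‖x‖ < 1) : x ∈ Metric.eball (0 : ℂ) 1 := by
  rw [← ENNReal.ofReal_one, Metric.eball_ofReal]
  simpa using hx

theorem hasSum_choose_mul_pow {x : ℂ} (hx : ‖x‖ < 1) (a : ℂ) :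
    HasSum (fun n => Ring.choose a n * x ^ n) ((1 + x) ^ a) := by
  have h := (one_add_cpow_hasFPowerSeriesOnBall_zero (a := a)).hasSum (mem_eball_zero_one hx)
  simpa [binomialSeries, mul_comm] using h

theorem summable_norm_choose_mul_pow {x : ℂ} (hx : ‖x‖ < 1) (a : ℂ) :
    Summable (fun n => ‖Ring.choose a n * x ^ n‖) := by
  have h := (binomialSeries ℂ a).summable_norm_apply
    (Metric.eball_subset_eball binomialSeries_radius_ge_one (mem_eball_zero_one hx))
  simpa [binomialSeries, mul_comm] using h

variable {z w : ℂ}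

theorem intCast_choose_mul_zpow_mul_pow (hz : z ≠ 0) (m : ℤ) (n : ℕ) :
    ((Ring.choose m n : ℤ) : ℂ) * z ^ (m - n) * w ^ n =
      z ^ m * (Ring.choose (m : ℂ) n * (w / z) ^ n) := by
  rw [intCast_choose, zpow_sub₀ hz, zpow_natCast, div_pow]
  ring

theorem hasSum_intCast_choose_mul_zpow_mul_pow (h : ‖w‖ < ‖z‖) (m : ℤ) :
    HasSum (fun n : ℕ => ((Ring.choose m n : ℤ) : ℂ) * z ^ (m - n) * w ^ n)
      ((z + w) ^ m) := by
  have hz := ne_zero_of_norm_lt h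
  rw [funext (intCast_choose_mul_zpow_mul_pow hz m),
    show z + w = z * (1 + w / z) by field_simp, mul_zpow, ← cpow_intCast (1 + w / z)]
  exact (hasSum_choose_mul_pow (norm_div_lt_one_of_norm_lt h) m).mul_left _

theorem summable_norm_intCast_choose_mul_zpow_mul_pow (h : ‖w‖ < ‖z‖) (m : ℤ) :
    Summable (fun n : ℕ => ‖((Ring.choose m n : ℤ) : ℂ) * z ^ (m - n) * w ^ n‖) := by
  simp_rw [intCast_choose_mul_zpow_mul_pow (ne_zero_of_norm_lt h) m, norm_mul (z ^ m)]
  exact (summable_norm_choose_mul_pow (norm_div_lt_one_of_norm_lt h) m).mul_left _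

end Complex

theorem cbinom_eq_choose (n : ℤ) (j : ℕ) : cbinom n j = Ring.choose n j := by
  rw [Complex.intCast_choose, Ring.choose_eq_smul, ← Polynomial.aeval_eq_smeval]
  simp [cbinom, Polynomial.aeval_def, Polynomial.eval₂_eq_eval_map, descPochhammer_map,
    descPochhammer_eval_eq_prod_range, div_eq_inv_mul]

theorem neg_one_pow_mul_choose_mul_zpow_eq_sum (r t : ℤ) (s l : ℕ) {z : ℂ} (hz : z ≠ 0)
    (w : ℂ) :
    (-1 : ℂ) ^ (s + l) * ((Ring.choose ((s : ℤ) + t + l + 1 - r) s : ℤ) : ℂ) *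
        ((Ring.choose (-t - 1) l : ℤ) : ℂ) * z ^ (r - (s : ℤ) - t - l - 2) * w ^ l =
      ∑ j ∈ range (s + 1), ((Ring.choose (r - 1) j : ℤ) : ℂ) *
        ((Ring.choose (-t - 1) (s - j) : ℤ) : ℂ) * z ^ (r - 1 - (j : ℤ)) *
          (((Ring.choose (-t - 1 - s + j) l : ℤ) : ℂ) * z ^ (-t - 1 - (s : ℤ) + j - l) *
            (-w) ^ l) := by
  have hcoeff := Ring.sum_choose_mul_choose_mul_choose (r - 1) (-t - 1) s l
  rw [show (s : ℤ) - 1 - (r - 1 + (-t - 1 - l)) = s + t + l + 1 - r by ring] at hcoeff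
  have hpow (j : ℕ) : z ^ (r - 1 - (j : ℤ)) * z ^ (-t - 1 - (s : ℤ) + j - l) =
      z ^ (r - (s : ℤ) - t - l - 2) := by
    rw [← zpow_add₀ hz]
    congr 1
    ring
  calc _ = ((-1) ^ s * Ring.choose ((s : ℤ) + t + l + 1 - r) s * Ring.choose (-t - 1) l : ℤ) *
          (z ^ (r - (s : ℤ) - t - l - 2) * (-w) ^ l) := by
        push_cast
        rw [neg_pow]
        ring
    _ = _ := by
        rw [← hcoeff, Int.cast_sum, sum_mul]
        refine sum_congr rfl fun j _ => ?_
        rw [← hpow j]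
        push_cast
        ring

theorem delta_identity_14_9_lhs_coefficient_general (r t : ℤ) (s : ℕ) (z₁ z₂ : ℂ)
    (h₁ : ‖z₂‖ < ‖z₁‖) :
    Summable (fun l : ℕ => ‖(-1 : ℂ) ^ (s + l) * cbinom ((s : ℤ) + t + (l : ℤ) + 1 - r) s *
        cbinom (-t - 1) l * z₁ ^ (r - (s : ℤ) - t - (l : ℤ) - 2) * z₂ ^ l‖) ∧
    ∑' l : ℕ, (-1 : ℂ) ^ (s + l) * cbinom ((s : ℤ) + t + (l : ℤ) + 1 - r) s *
        cbinom (-t - 1) l * z₁ ^ (r - (s : ℤ) - t - (l : ℤ) - 2) * z₂ ^ l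
      = ∑ j ∈ Finset.range (s + 1), cbinom (r - 1) j * cbinom (-t - 1) (s - j) *
        z₁ ^ (r - 1 - (j : ℤ)) * (z₁ - z₂) ^ (-t - 1 - (s : ℤ) + (j : ℤ)) := by
  have h₁' : ‖-z₂‖ < ‖z₁‖ := by rwa [norm_neg]
  simp only [cbinom_eq_choose,
    neg_one_pow_mul_choose_mul_zpow_eq_sum r t s _ (ne_zero_of_norm_lt h₁)]
  set c : ℕ → ℂ := fun j =>
    Ring.choose (r - 1) j * Ring.choose (-t - 1) (s - j) * z₁ ^ (r - 1 - (j : ℤ))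
  refine ⟨?_, ?_⟩
  · have hbound := summable_sum (s := range (s + 1)) fun (j : ℕ) _ =>
      (Complex.summable_norm_intCast_choose_mul_zpow_mul_pow h₁' (-t - 1 - s + j)).mul_left
        ‖c j‖
    refine hbound.of_nonneg_of_le (fun _ => norm_nonneg _) fun l => ?_
    exact (norm_sum_le _ _).trans_eq (sum_congr rfl fun j _ => norm_mul _ _)
  · rw [(hasSum_sum fun (j : ℕ) _ => (Complex.hasSum_intCast_choose_mul_zpow_mul_pow h₁'
      (-t - 1 - s + j)).mul_left (c j)).tsum_eq, ← sub_eq_add_neg]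

theorem delta_identity_14_9_lhs_coefficient (r t : ℤ) (s : ℕ) (z₁ z₂ : ℂ)
    (h₁ : ‖z₂‖ < ‖z₁‖) (h₂ : 0 < ‖z₂‖) :
    Summable (fun l : ℕ => ‖(-1 : ℂ) ^ (s + l) * cbinom ((s : ℤ) + t + (l : ℤ) + 1 - r) s *
        cbinom (-t - 1) l * z₁ ^ (r - (s : ℤ) - t - (l : ℤ) - 2) * z₂ ^ l‖) ∧
    ∑' l : ℕ, (-1 : ℂ) ^ (s + l) * cbinom ((s : ℤ) + t + (l : ℤ) + 1 - r) s *
        cbinom (-t - 1) l * z₁ ^ (r - (s : ℤ) - t - (l : ℤ) - 2) * z₂ ^ l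
      = ∑ j ∈ Finset.range (s + 1), cbinom (r - 1) j * cbinom (-t - 1) (s - j) *
        z₁ ^ (r - 1 - (j : ℤ)) * (z₁ - z₂) ^ (-t - 1 - (s : ℤ) + (j : ℤ)) :=
  delta_identity_14_9_lhs_coefficient_general r t s z₁ z₂ h₁
end

section
/- Let δ > 0, let m, n : ℕ → ℝ be strictly increasing sequences of real numbers, and let a, b : ℕ → ℂ be sequences of complex numbers with a_i ≠ 0 and b_i ≠ 0 for every i. Suppose that for every complex number z with 0 < |z| < δ, both families (a_i · z^{m_i})_{i∈ℕ} and (b_i · z^{n_i})_{i∈ℕ} are absolutely summable and ∑_{i} a_i · z^{m_i} = ∑_{i} b_i · z^{n_i}. Then m_i = n_i and a_i = b_i for every i. -/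
/-! On the positive reals the principal power `t ^ μ` is the real power, so it suffices to
compare the expansions `f t = ∑ Aᵢ t ^ Mᵢ` for `t ∈ (0, δ)`. Absolute convergence at one
point `t₀` dominates the tail `∑_{i ≥ 1} Aᵢ t ^ Mᵢ` by a constant times `t ^ M₁` on `(0, t₀]`,
hence `t ^ (-M₀) f t → A₀` as `t → 0⁺`. Since `t ^ (-p) f t` can have a nonzero limit for only
one `p`, two expansions of the same function share their leading exponent and coefficient;
cancelling the leading terms and inducting gives the rest. -/

open Filter Topology Set

noncomputable def rpowSeries (A : ℕ → ℂ) (M : ℕ → ℝ) (t : ℝ) : ℂ :=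
  ∑' i, A i * ((t ^ M i : ℝ) : ℂ)

lemma tendsto_rpow_nhdsGT_zero {s : ℝ} (hs : 0 < s) :
    Tendsto (fun t : ℝ => t ^ s) (𝓝[>] 0) (𝓝 0) := by
  simpa [Real.zero_rpow hs.ne'] using
    (Real.continuousAt_rpow_const 0 s (Or.inr hs.le)).tendsto.mono_left nhdsWithin_le_nhds

lemma norm_mul_ofReal_rpow (c : ℂ) {t : ℝ} (ht : 0 ≤ t) (r : ℝ) :
    ‖c * ((t ^ r : ℝ) : ℂ)‖ = ‖c‖ * t ^ r := by
  rw [norm_mul, Complex.norm_real, Real.norm_of_nonneg (Real.rpow_nonneg ht r)]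

lemma rpow_le_rpow_sub_mul_rpow {t t₀ q e : ℝ} (ht : 0 < t) (htt₀ : t ≤ t₀) (hqe : q ≤ e) :
    t ^ e ≤ t₀ ^ (e - q) * t ^ q := by
  calc t ^ e = t ^ (e - q) * t ^ q := by rw [← Real.rpow_add ht, sub_add_cancel]
    _ ≤ t₀ ^ (e - q) * t ^ q := by gcongr

section

variable {A : ℕ → ℂ} {E : ℕ → ℝ} {t t₀ q : ℝ}

lemma summable_norm_mul_rpow_sub (ht₀ : 0 < t₀)
    (hsum : Summable fun i => ‖A i‖ * t₀ ^ E i) (q : ℝ) :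
    Summable fun i => ‖A i‖ * t₀ ^ (E i - q) := by
  refine (hsum.mul_right (t₀ ^ q)⁻¹).congr fun i => ?_
  rw [Real.rpow_sub ht₀, div_eq_mul_inv, mul_assoc]

lemma norm_mul_rpow_le (ht : 0 < t) (htt₀ : t ≤ t₀) (hE : ∀ i, q ≤ E i) (i : ℕ) :
    ‖A i‖ * t ^ E i ≤ ‖A i‖ * t₀ ^ (E i - q) * t ^ q := by
  rw [mul_assoc]
  exact mul_le_mul_of_nonneg_left (rpow_le_rpow_sub_mul_rpow ht htt₀ (hE i)) (norm_nonneg _)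

lemma summable_norm_mul_rpow_of_le (ht : 0 < t) (htt₀ : t ≤ t₀) (hE : ∀ i, q ≤ E i)
    (hsum : Summable fun i => ‖A i‖ * t₀ ^ E i) :
    Summable fun i => ‖A i‖ * t ^ E i :=
  .of_nonneg_of_le (fun _ => by positivity) (norm_mul_rpow_le ht htt₀ hE)
    ((summable_norm_mul_rpow_sub (ht.trans_le htt₀) hsum q).mul_right _)

lemma norm_rpowSeries_le (ht : 0 < t) (htt₀ : t ≤ t₀) (hE : ∀ i, q ≤ E i)
    (hsum : Summable fun i => ‖A i‖ * t₀ ^ E i) :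
    ‖rpowSeries A E t‖ ≤ (∑' i, ‖A i‖ * t₀ ^ (E i - q)) * t ^ q := by
  have hnorm (i : ℕ) := norm_mul_ofReal_rpow (A i) ht.le (E i)
  have hbound := (summable_norm_mul_rpow_sub (ht.trans_le htt₀) hsum q).mul_right (t ^ q)
  calc ‖rpowSeries A E t‖ ≤ ∑' i, ‖A i‖ * t ^ E i := by
        simpa only [rpowSeries, hnorm] using norm_tsum_le_tsum_norm
          ((summable_norm_mul_rpow_of_le ht htt₀ hE hsum).congr fun i => (hnorm i).symm)
    _ ≤ ∑' i, ‖A i‖ * t₀ ^ (E i - q) * t ^ q :=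
        Summable.tsum_le_tsum (norm_mul_rpow_le ht htt₀ hE)
          (summable_norm_mul_rpow_of_le ht htt₀ hE hsum) hbound
    _ = (∑' i, ‖A i‖ * t₀ ^ (E i - q)) * t ^ q := tsum_mul_right

lemma rpowSeries_eq_zero_add (ht : 0 ≤ t) (hsum : Summable fun i => ‖A i‖ * t ^ E i) :
    rpowSeries A E t =
      A 0 * ((t ^ E 0 : ℝ) : ℂ) + rpowSeries (fun i => A (i + 1)) (fun i => E (i + 1)) t :=
  (Summable.of_norm (by simpa only [norm_mul_ofReal_rpow _ ht] using hsum)).tsum_eq_zero_add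

end

lemma tendsto_rpow_neg_mul_rpowSeries {A : ℕ → ℂ} {M : ℕ → ℝ} {t₀ : ℝ} (ht₀ : 0 < t₀)
    (hM : StrictMono M) (hsum : Summable fun i => ‖A i‖ * t₀ ^ M i) :
    Tendsto (fun t => ((t ^ (-M 0) : ℝ) : ℂ) * rpowSeries A M t) (𝓝[>] 0) (𝓝 (A 0)) := by
  set A' := fun i => A (i + 1)
  set M' := fun i => M (i + 1)
  set C := ∑' i, ‖A' i‖ * t₀ ^ (M' i - M 1)
  have htail : Tendsto (fun t => ((t ^ (-M 0) : ℝ) : ℂ) * rpowSeries A' M' t) (𝓝[>] 0) (𝓝 0) := by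
    have hlim : Tendsto (fun t : ℝ => C * t ^ (M 1 - M 0)) (𝓝[>] 0) (𝓝 0) := by
      simpa using (tendsto_rpow_nhdsGT_zero (sub_pos.2 (hM zero_lt_one))).const_mul C
    refine squeeze_zero_norm' ?_ hlim
    filter_upwards [Ioc_mem_nhdsGT ht₀] with t ⟨ht, htt₀⟩
    rw [norm_mul, Complex.norm_real, Real.norm_of_nonneg (Real.rpow_nonneg ht.le _)]
    calc t ^ (-M 0) * ‖rpowSeries A' M' t‖ ≤ t ^ (-M 0) * (C * t ^ M 1) := by
          gcongr
          exact norm_rpowSeries_le ht htt₀ (fun i => hM.monotone (by omega))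
            ((summable_nat_add_iff 1).2 hsum)
      _ = C * t ^ (M 1 - M 0) := by rw [sub_eq_add_neg, Real.rpow_add ht]; ring
  refine (by simpa using tendsto_const_nhds.add htail : Tendsto _ _ (𝓝 (A 0))).congr' ?_
  filter_upwards [Ioc_mem_nhdsGT ht₀] with t ⟨ht, htt₀⟩
  have hsumt := summable_norm_mul_rpow_of_le ht htt₀ (fun i => hM.monotone (Nat.zero_le i)) hsum
  rw [rpowSeries_eq_zero_add ht.le hsumt, mul_add, Real.rpow_neg ht.le, Complex.ofReal_inv,
    mul_comm (A 0), inv_mul_cancel_left₀ (by exact_mod_cast (Real.rpow_pos_of_pos ht _).ne')]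

lemma le_of_tendsto_rpow_neg_mul {f : ℝ → ℂ} {p q : ℝ} {α β : ℂ}
    (hp : Tendsto (fun t => ((t ^ (-p) : ℝ) : ℂ) * f t) (𝓝[>] 0) (𝓝 α))
    (hq : Tendsto (fun t => ((t ^ (-q) : ℝ) : ℂ) * f t) (𝓝[>] 0) (𝓝 β)) (hβ : β ≠ 0) :
    p ≤ q := by
  by_contra! hqp
  have h : Tendsto (fun t => ((t ^ (p - q) : ℝ) : ℂ) * (((t ^ (-p) : ℝ) : ℂ) * f t))
      (𝓝[>] 0) (𝓝 0) := by
    simpa using ((Complex.continuous_ofReal.tendsto 0).comp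
      (tendsto_rpow_nhdsGT_zero (sub_pos.2 hqp))).mul hp
  refine hβ (tendsto_nhds_unique hq (h.congr' ?_))
  filter_upwards [self_mem_nhdsWithin] with t (ht : 0 < t)
  rw [← mul_assoc, ← Complex.ofReal_mul, ← Real.rpow_add ht, sub_add_eq_add_sub, add_neg_cancel,
    zero_sub]

section

variable {A B : ℕ → ℂ} {M N : ℕ → ℝ} {δ : ℝ}

lemma leading_eq_of_rpowSeries_eq (hδ : 0 < δ) (hM : StrictMono M) (hN : StrictMono N)
    (hA : A 0 ≠ 0) (hB : B 0 ≠ 0)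
    (hsA : ∀ t ∈ Ioo 0 δ, Summable fun i => ‖A i‖ * t ^ M i)
    (hsB : ∀ t ∈ Ioo 0 δ, Summable fun i => ‖B i‖ * t ^ N i)
    (heq : ∀ t ∈ Ioo 0 δ, rpowSeries A M t = rpowSeries B N t) :
    M 0 = N 0 ∧ A 0 = B 0 := by
  have ht₀ : δ / 2 ∈ Ioo 0 δ := ⟨half_pos hδ, half_lt_self hδ⟩
  have hAB : rpowSeries A M =ᶠ[𝓝[>] 0] rpowSeries B N :=
    Filter.eventually_of_mem (Ioo_mem_nhdsGT hδ) heq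
  have hTA := tendsto_rpow_neg_mul_rpowSeries ht₀.1 hM (hsA _ ht₀)
  have hTB : Tendsto (fun t => ((t ^ (-N 0) : ℝ) : ℂ) * rpowSeries A M t) (𝓝[>] 0) (𝓝 (B 0)) :=
    (tendsto_rpow_neg_mul_rpowSeries ht₀.1 hN (hsB _ ht₀)).congr'
      (EventuallyEq.rfl.mul hAB.symm)
  have hMN : M 0 = N 0 :=
    le_antisymm (le_of_tendsto_rpow_neg_mul hTA hTB hB) (le_of_tendsto_rpow_neg_mul hTB hTA hA)
  rw [hMN] at hTA
  exact ⟨hMN, tendsto_nhds_unique hTA hTB⟩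

theorem eq_of_rpowSeries_eq (hδ : 0 < δ) (hM : StrictMono M) (hN : StrictMono N)
    (hA : ∀ i, A i ≠ 0) (hB : ∀ i, B i ≠ 0)
    (hsA : ∀ t ∈ Ioo 0 δ, Summable fun i => ‖A i‖ * t ^ M i)
    (hsB : ∀ t ∈ Ioo 0 δ, Summable fun i => ‖B i‖ * t ^ N i)
    (heq : ∀ t ∈ Ioo 0 δ, rpowSeries A M t = rpowSeries B N t) (k : ℕ) :
    M k = N k ∧ A k = B k := by
  induction k generalizing A B M N with
  | zero => exact leading_eq_of_rpowSeries_eq hδ hM hN (hA 0) (hB 0) hsA hsB heq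
  | succ k ih =>
    obtain ⟨hMN, hAB⟩ := leading_eq_of_rpowSeries_eq hδ hM hN (hA 0) (hB 0) hsA hsB heq
    refine ih (fun _ _ h => hM (Nat.succ_lt_succ h)) (fun _ _ h => hN (Nat.succ_lt_succ h))
      (fun i => hA (i + 1)) (fun i => hB (i + 1))
      (fun t ht => (summable_nat_add_iff 1).2 (hsA t ht))
      (fun t ht => (summable_nat_add_iff 1).2 (hsB t ht)) fun t ht => ?_
    have h := heq t ht
    rwa [rpowSeries_eq_zero_add ht.1.le (hsA t ht), rpowSeries_eq_zero_add ht.1.le (hsB t ht),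
      hMN, hAB, add_right_inj] at h

end

theorem expansion_uniqueness_14_5 (δ : ℝ) (hδ : 0 < δ)
    (m n : ℕ → ℝ) (hm : StrictMono m) (hn : StrictMono n)
    (a b : ℕ → ℂ) (ha : ∀ i, a i ≠ 0) (hb : ∀ i, b i ≠ 0)
    (h : ∀ z : ℂ, 0 < ‖z‖ → ‖z‖ < δ →
      Summable (fun i : ℕ => ‖a i * z ^ ((m i : ℝ) : ℂ)‖) ∧
      Summable (fun i : ℕ => ‖b i * z ^ ((n i : ℝ) : ℂ)‖) ∧
      ∑' i : ℕ, a i * z ^ ((m i : ℝ) : ℂ) = ∑' i : ℕ, b i * z ^ ((n i : ℝ) : ℂ)) :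
    ∀ i : ℕ, m i = n i ∧ a i = b i := by
  have hreal : ∀ t ∈ Ioo 0 δ, (Summable fun i => ‖a i‖ * t ^ m i) ∧
      (Summable fun i => ‖b i‖ * t ^ n i) ∧ rpowSeries a m t = rpowSeries b n t := by
    rintro t ⟨ht, htδ⟩
    have hnorm : ‖(t : ℂ)‖ = t := by rw [Complex.norm_real, Real.norm_of_nonneg ht.le]
    have hz := h t (by rwa [hnorm]) (by rwa [hnorm])
    simp only [← Complex.ofReal_cpow ht.le, norm_mul_ofReal_rpow _ ht.le] at hz
    exact hz
  exact eq_of_rpowSeries_eq hδ hm hn ha hb (fun t ht => (hreal t ht).1)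
    (fun t ht => (hreal t ht).2.1) fun t ht => (hreal t ht).2.2
end

section
/- Let δ > 0, let m : ℕ → ℝ be a strictly increasing sequence of real numbers, and let a : ℕ → ℂ. Suppose that for every complex number z with 0 < |z| < δ, the family (a_i · z^{m_i})_{i∈ℕ} is absolutely summable and ∑_{i} a_i · z^{m_i} = 0. Then a_i = 0 for every i. -/
/-!
Restricting to real `x > 0` reduces the claim to a real Banach space statement about
`F x = ∑ x ^ m k • a k`. Dividing by the leading power, `x ^ (-m 0) • F x → a 0` as `x → 0⁺` by
dominated convergence for series, the terms being dominated by their values at one point `x₀`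
because all exponents `m k - m 0` are nonnegative. So `F = 0` near `0⁺` forces `a 0 = 0`;
dropping the vanishing head and shifting the sequences gives the remaining coefficients.
-/

open Filter Topology

section RpowSeries

variable {E : Type*} [NormedAddCommGroup E] [NormedSpace ℝ E] [CompleteSpace E]
  {m : ℕ → ℝ} {a : ℕ → E} {x₀ : ℝ}

theorem tendsto_rpow_neg_smul_tsum_rpow_smul (hm : ∀ k ≠ 0, m 0 < m k) (hx₀ : 0 < x₀)
    (hsum : Summable fun k => ‖x₀ ^ m k • a k‖) :
    Tendsto (fun x : ℝ => x ^ (-m 0) • ∑' k, x ^ m k • a k) (𝓝[>] 0) (𝓝 (a 0)) := by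
  have hm' (k : ℕ) : 0 ≤ m k - m 0 := by
    rcases eq_or_ne k 0 with rfl | hk
    · simp
    · exact (sub_pos.2 (hm k hk)).le
  have factor (x : ℝ) (hx : 0 < x) :
      x ^ (-m 0) • ∑' k, x ^ m k • a k = ∑' k, x ^ (m k - m 0) • a k := by
    rw [← tsum_const_smul'']
    refine tsum_congr fun k => ?_
    rw [smul_smul, ← Real.rpow_add hx, neg_add_eq_sub]
  have limit : ∑' k, (0 : ℝ) ^ (m k - m 0) • a k = a 0 := by
    rw [tsum_eq_single 0 fun k hk => by rw [Real.zero_rpow (sub_pos.2 (hm k hk)).ne', zero_smul]]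
    simp
  have dominated : Tendsto (fun x : ℝ => ∑' k, x ^ (m k - m 0) • a k) (𝓝[>] 0) (𝓝 (a 0)) := by
    rw [← limit]
    refine tendsto_tsum_of_dominated_convergence
      (bound := fun k => ‖x₀ ^ (m k - m 0) • a k‖) ?_ (fun k => ?_) ?_
    · refine (hsum.div_const (x₀ ^ m 0)).congr fun k => ?_
      rw [norm_smul, norm_smul, Real.norm_of_nonneg (Real.rpow_nonneg hx₀.le _),
        Real.norm_of_nonneg (Real.rpow_nonneg hx₀.le _), Real.rpow_sub hx₀]
      ring
    · exact ((Real.continuousAt_rpow_const 0 _ (Or.inr (hm' k))).tendsto.smul_const (a k)).mono_left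
        nhdsWithin_le_nhds
    · filter_upwards [Ioc_mem_nhdsGT hx₀] with x hx k
      simp only [norm_smul, Real.norm_of_nonneg (Real.rpow_nonneg hx.1.le _),
        Real.norm_of_nonneg (Real.rpow_nonneg hx₀.le _)]
      gcongr
      · exact hx.1.le
      · exact hm' k
      · exact hx.2
  exact dominated.congr' (eventually_mem_nhdsWithin.mono fun x hx => (factor x hx).symm)

theorem head_eq_zero_of_eventually_hasSum_rpow_smul_zero (hm : ∀ k ≠ 0, m 0 < m k)
    (hx₀ : 0 < x₀) (hsum : Summable fun k => ‖x₀ ^ m k • a k‖)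
    (hzero : ∀ᶠ x in 𝓝[>] (0 : ℝ), HasSum (fun k => x ^ m k • a k) 0) : a 0 = 0 := by
  refine tendsto_nhds_unique (tendsto_rpow_neg_smul_tsum_rpow_smul hm hx₀ hsum) ?_
  exact tendsto_const_nhds.congr' (hzero.mono fun x hx => by simp [hx.tsum_eq])

theorem eq_zero_of_eventually_hasSum_rpow_smul_zero (hm : StrictMono m) (hx₀ : 0 < x₀)
    (hsum : Summable fun k => ‖x₀ ^ m k • a k‖)
    (hzero : ∀ᶠ x in 𝓝[>] (0 : ℝ), HasSum (fun k => x ^ m k • a k) 0) : a = 0 := by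
  funext n
  induction n using Nat.strong_induction_on with
  | _ n ih =>
    have hshift : ∀ᶠ x in 𝓝[>] (0 : ℝ), HasSum (fun k => x ^ m (k + n) • a (k + n)) 0 := by
      filter_upwards [hzero] with x hx
      rwa [← hasSum_nat_add_iff' n, Finset.sum_eq_zero fun i hi => by
        rw [ih i (Finset.mem_range.1 hi), Pi.zero_apply, smul_zero], sub_zero] at hx
    simpa using head_eq_zero_of_eventually_hasSum_rpow_smul_zero (m := fun k => m (k + n))
      (a := fun k => a (k + n)) (fun k hk => hm (by omega)) hx₀
      ((summable_nat_add_iff (f := fun k => ‖x₀ ^ m k • a k‖) n).mpr hsum) hshift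

end RpowSeries

theorem Complex.mul_ofReal_cpow_ofReal {x : ℝ} (hx : 0 ≤ x) (μ : ℝ) (c : ℂ) :
    c * (x : ℂ) ^ (μ : ℂ) = x ^ μ • c := by
  rw [← Complex.ofReal_cpow hx, Complex.real_smul, mul_comm]

theorem expansion_vanishing_14_5 (δ : ℝ) (hδ : 0 < δ)
    (m : ℕ → ℝ) (hm : StrictMono m) (a : ℕ → ℂ)
    (h : ∀ z : ℂ, 0 < ‖z‖ → ‖z‖ < δ →
      Summable (fun i : ℕ => ‖a i * z ^ ((m i : ℝ) : ℂ)‖) ∧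
      ∑' i : ℕ, a i * z ^ ((m i : ℝ) : ℂ) = 0) :
    ∀ i : ℕ, a i = 0 := by
  have h_real (x : ℝ) (hx : x ∈ Set.Ioo 0 δ) :
      Summable (fun i => ‖x ^ m i • a i‖) ∧ ∑' i, x ^ m i • a i = 0 := by
    have hx' : ‖(x : ℂ)‖ = x := Complex.norm_of_nonneg hx.1.le
    simpa only [Complex.mul_ofReal_cpow_ofReal hx.1.le] using
      h x (by rw [hx']; exact hx.1) (by rw [hx']; exact hx.2)
  have hδ' : δ / 2 ∈ Set.Ioo 0 δ := ⟨half_pos hδ, half_lt_self hδ⟩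
  refine congrFun (eq_zero_of_eventually_hasSum_rpow_smul_zero hm hδ'.1 (h_real _ hδ').1 ?_)
  filter_upwards [Ioo_mem_nhdsGT hδ] with x hx
  obtain ⟨hsum, hzero⟩ := h_real x hx
  exact hzero ▸ hsum.of_norm.hasSum
end

section
/- Let δ > 0, let m : ℕ → ℝ be a strictly increasing sequence of real numbers, and let a : ℕ → ℂ. Suppose that for every complex number z with 0 < |z| < δ, the family (a_i · z^{m_i})_{i∈ℕ} is absolutely summable, and set f(z) = ∑_{i} a_i · z^{m_i}. Then z^{−m_0} · f(z) tends to a_0 as z tends to 0 through nonzero values. -/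
/-!
Multiplying by `z ^ (-m 0)` turns the series into `∑ a i * z ^ (m i - m 0)`, whose exponents
vanish for `i = 0` and are positive otherwise. For `‖z‖ ≤ r < δ` each term is dominated by
`‖a i‖ * r ^ (m i - m 0)`, a summable majorant, so by Tannery's theorem the limit may be taken
termwise: only the constant term `a 0` survives.
-/

open Filter Topology

namespace Complex

lemma cpow_ofReal_neg_mul_cpow_ofReal {z : ℂ} (hz : z ≠ 0) (μ ν : ℝ) :
    z ^ ((-μ : ℝ) : ℂ) * z ^ (ν : ℂ) = z ^ ((ν - μ : ℝ) : ℂ) := by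
  rw [← cpow_add _ _ hz]
  push_cast
  ring_nf

lemma tendsto_cpow_ofReal_nhds_zero {μ : ℝ} (hμ : 0 < μ) :
    Tendsto (fun z : ℂ => z ^ (μ : ℂ)) (𝓝 0) (𝓝 0) := by
  rw [tendsto_zero_iff_norm_tendsto_zero]
  simp only [norm_cpow_real]
  simpa [Real.zero_rpow hμ.ne'] using (tendsto_norm_zero (E := ℂ)).rpow_const (Or.inr hμ.le)

theorem tendsto_tsum_mul_cpow_ofReal_nhds_zero {a : ℕ → ℂ} {e : ℕ → ℝ} (he₀ : e 0 = 0)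
    (he : ∀ i, i ≠ 0 → 0 < e i) {r : ℝ} (hr : 0 < r)
    (hsum : Summable fun i => ‖a i‖ * r ^ e i) :
    Tendsto (fun z : ℂ => ∑' i, a i * z ^ (e i : ℂ)) (𝓝 0) (𝓝 (a 0)) := by
  have hlim : ∀ i, Tendsto (fun z : ℂ => a i * z ^ (e i : ℂ)) (𝓝 0)
      (𝓝 (Pi.single (M := fun _ => ℂ) 0 (a 0) i)) := by
    intro i
    rcases eq_or_ne i 0 with rfl | hi
    · simp [he₀]
    · simpa [hi] using (tendsto_cpow_ofReal_nhds_zero (he i hi)).const_mul (a i)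
  have hbound : ∀ᶠ z : ℂ in 𝓝 0, ∀ i, ‖a i * z ^ (e i : ℂ)‖ ≤ ‖a i‖ * r ^ e i := by
    filter_upwards [Metric.closedBall_mem_nhds 0 hr] with z hz i
    rw [norm_mul, norm_cpow_real]
    have he_nonneg : 0 ≤ e i := by
      rcases eq_or_ne i 0 with rfl | hi
      exacts [he₀.ge, (he i hi).le]
    gcongr
    simpa using hz
  simpa using tendsto_tsum_of_dominated_convergence hsum hlim hbound

end Complex

open Complex

theorem leading_coefficient_limit_14_5 (δ : ℝ) (hδ : 0 < δ)
    (m : ℕ → ℝ) (hm : StrictMono m) (a : ℕ → ℂ)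
    (h : ∀ z : ℂ, 0 < ‖z‖ → ‖z‖ < δ →
      Summable (fun i : ℕ => ‖a i * z ^ ((m i : ℝ) : ℂ)‖)) :
    Filter.Tendsto (fun z : ℂ => z ^ ((-(m 0) : ℝ) : ℂ) * ∑' i : ℕ, a i * z ^ ((m i : ℝ) : ℂ))
      (nhdsWithin 0 {(0 : ℂ)}ᶜ) (nhds (a 0)) := by
  have hr : 0 < δ / 2 := half_pos hδ
  have hsum : Summable fun i => ‖a i‖ * (δ / 2) ^ (m i - m 0) := by
    have hr_norm : ‖((δ / 2 : ℝ) : ℂ)‖ = δ / 2 := by simp [hδ.le]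
    refine ((h _ (hr_norm ▸ hr) (by linarith)).mul_right ((δ / 2) ^ (-m 0))).congr fun i => ?_
    rw [norm_mul, norm_cpow_real, hr_norm, sub_eq_add_neg, Real.rpow_add hr]
    ring
  have hlim := tendsto_tsum_mul_cpow_ofReal_nhds_zero (e := fun i => m i - m 0) (sub_self _)
    (fun i hi => sub_pos.2 (hm (Nat.pos_of_ne_zero hi))) hr hsum
  refine (hlim.mono_left nhdsWithin_le_nhds).congr' <|
    eventually_nhdsWithin_of_forall fun z (hz : z ≠ 0) => ?_
  dsimp only
  rw [eq_comm, ← tsum_mul_left]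
  refine tsum_congr fun i => ?_
  rw [mul_left_comm, cpow_ofReal_neg_mul_cpow_ofReal hz]
end

section
/- Let δ > 0, let m, n : ℕ → ℝ be strictly increasing sequences of real numbers, and let a, b : ℕ → ℂ. Suppose that for every complex number z with 0 < |z| < δ, both families (a_i · z^{m_i})_{i∈ℕ} and (b_j · z^{n_j})_{j∈ℕ} are absolutely summable and ∑_{i} a_i · z^{m_i} = ∑_{j} b_j · z^{n_j}. If m_{i_0} = −1 for some index i_0, then: (i) if there is an index j_0 with n_{j_0} = −1, then a_{i_0} = b_{j_0}; and (ii) if n_j ≠ −1 for all j, then a_{i_0} = 0. Consequently, the residue Res_z f, defined as the coefficient at exponent −1 of an expansion of f (and as 0 if no exponent equals −1), depends only on the function f and not on the chosen expansion. -/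
/-!
Put `F s := (coefficient of r ^ s in the first expansion) - (coefficient in the second)`. Its
support lies in `range m ∪ range n`, a well-founded set, and `∑ₛ F s r ^ s = 0` for small `r > 0`.
If `F ≠ 0`, let `t` be the least exponent with `F t ≠ 0`; then `r ^ (-t) ∑ₛ F s r ^ s → F t` as
`r → 0⁺` by dominated convergence, so `F t = 0`, a contradiction. Hence `F = 0`, and comparing
coefficients at `s = -1` gives both claims.
-/

open Filter Topology Function Set

theorem tendsto_rpow_nhdsGT_zero_s9 {e : ℝ} (he : 0 < e) :
    Tendsto (fun r : ℝ => r ^ e) (𝓝[>] 0) (𝓝 0) := by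
  simpa [Real.zero_rpow he.ne'] using
    ((Real.continuousAt_rpow_const 0 e (Or.inr he.le)).tendsto).mono_left nhdsWithin_le_nhds

section
variable {E : Type*} [NormedAddCommGroup E] [NormedSpace ℝ E] [CompleteSpace E]

theorem apply_eq_zero_of_tsum_rpow_smul_eq_zero {F : ℝ → E} {t r₀ : ℝ} (hr₀ : 0 < r₀)
    (hsum : Summable fun s => ‖r₀ ^ s • F s‖)
    (hzero : ∀ᶠ r in 𝓝[>] (0 : ℝ), ∑' s, r ^ s • F s = 0) (hlow : ∀ s < t, F s = 0) :
    F t = 0 := by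
  classical
  -- The terms with `s > t` vanish in the limit, those with `s < t` vanish identically.
  have hlim : Tendsto (fun r : ℝ => ∑' s, r ^ (s - t) • F s) (𝓝[>] 0)
      (𝓝 (∑' s, (Pi.single t (F t) : ℝ → E) s)) := by
    refine tendsto_tsum_of_dominated_convergence (hsum.mul_left (r₀ ^ (-t))) (fun s => ?_) ?_
    · rcases lt_trichotomy s t with hst | rfl | hst
      · simp [hlow s hst, hst.ne]
      · simp
      · simpa [hst.ne'] using (tendsto_rpow_nhdsGT_zero_s9 (sub_pos.2 hst)).smul_const (F s)
    · filter_upwards [Ioc_mem_nhdsGT hr₀] with r ⟨hr, hrr₀⟩ s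
      by_cases hst : s < t
      · simp [hlow s hst]
      calc ‖r ^ (s - t) • F s‖ = r ^ (s - t) * ‖F s‖ := by
            rw [norm_smul, Real.norm_of_nonneg (by positivity)]
        _ ≤ r₀ ^ (s - t) * ‖F s‖ := by
            gcongr
            linarith [not_lt.1 hst]
        _ = r₀ ^ (-t) * ‖r₀ ^ s • F s‖ := by
            rw [norm_smul, Real.norm_of_nonneg (by positivity), sub_eq_neg_add,
              Real.rpow_add hr₀]
            ring
  have hzero' : ∀ᶠ r in 𝓝[>] (0 : ℝ), ∑' s, r ^ (s - t) • F s = 0 := by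
    filter_upwards [hzero, self_mem_nhdsWithin] with r hr (hr₀ : 0 < r)
    simp_rw [sub_eq_neg_add, Real.rpow_add hr₀, mul_smul, tsum_const_smul'', hr, smul_zero]
  rw [tsum_pi_single] at hlim
  exact tendsto_nhds_unique hlim (tendsto_const_nhds.congr' (hzero'.mono fun r h => h.symm))

theorem eq_zero_of_tsum_rpow_smul_eq_zero {F : ℝ → E} {r₀ : ℝ} (hr₀ : 0 < r₀)
    (hwf : (support F).IsWF) (hsum : Summable fun s => ‖r₀ ^ s • F s‖)
    (hzero : ∀ᶠ r in 𝓝[>] (0 : ℝ), ∑' s, r ^ s • F s = 0) : F = 0 := by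
  by_contra hF
  have hne : (support F).Nonempty := support_nonempty_iff.2 hF
  refine hwf.min_mem hne (apply_eq_zero_of_tsum_rpow_smul_eq_zero hr₀ hsum hzero fun s hs => ?_)
  by_contra hFs
  exact hwf.not_lt_min hne hFs hs
end

theorem Function.Injective.comp_extend_zero {ι α β γ : Type*} [Zero β] [Zero γ] {g : ι → α}
    (hg : Injective g) (f : ι → β) (φ : α → β → γ) (hφ : ∀ x, φ x 0 = 0) :
    (fun x => φ x (extend g f 0 x)) = extend g (fun i => φ (g i) (f i)) 0 := by
  funext x
  by_cases hx : ∃ i, g i = x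
  · obtain ⟨i, rfl⟩ := hx
    simp only [hg.extend_apply]
  · simp only [extend_apply' _ _ _ hx, Pi.zero_apply, hφ]

theorem Monotone.isWF_range {α β : Type*} [Preorder α] [WellQuasiOrderedLE α] [Preorder β]
    {f : α → β} (hf : Monotone f) : (range f).IsWF := by
  rw [← image_univ]
  exact ((isPWO_of_wellQuasiOrderedLE univ).image_of_monotone hf).isWF

section
variable {E ι : Type*} [NormedAddCommGroup E] [NormedSpace ℝ E] {m : ι → ℝ} {a : ι → E} {r : ℝ}

theorem summable_norm_rpow_smul_extend (hm : Injective m)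
    (ha : Summable fun i => ‖r ^ m i • a i‖) :
    Summable fun s => ‖r ^ s • extend m a 0 s‖ := by
  rw [hm.comp_extend_zero a (fun s x => ‖r ^ s • x‖) (by simp)]
  exact (summable_extend_zero hm).2 ha

theorem hasSum_rpow_smul_extend [CompleteSpace E] (hm : Injective m)
    (ha : Summable fun i => ‖r ^ m i • a i‖) :
    HasSum (fun s => r ^ s • extend m a 0 s) (∑' i, r ^ m i • a i) := by
  rw [hm.comp_extend_zero a (fun s x => r ^ s • x) (by simp), hasSum_extend_zero hm]
  exact ha.of_norm.hasSum
end

theorem extend_eq_extend_of_tsum_rpow_smul_eq {E : Type*} [NormedAddCommGroup E]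
    [NormedSpace ℝ E] [CompleteSpace E] {m n : ℕ → ℝ} (hm : StrictMono m)
    (hn : StrictMono n) {a b : ℕ → E} {δ : ℝ} (hδ : 0 < δ)
    (h : ∀ r ∈ Ioo 0 δ, Summable (fun i => ‖r ^ m i • a i‖) ∧
      Summable (fun j => ‖r ^ n j • b j‖) ∧ ∑' i, r ^ m i • a i = ∑' j, r ^ n j • b j) :
    extend m a 0 = extend n b 0 := by
  set F : ℝ → E := extend m a 0 - extend n b 0 with hF
  have hF_series : ∀ r ∈ Ioo 0 δ, HasSum (fun s => r ^ s • F s) 0 := by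
    intro r hr
    obtain ⟨ha, hb, hab⟩ := h r hr
    have hdiff := (hasSum_rpow_smul_extend hm.injective ha).sub
      (hasSum_rpow_smul_extend hn.injective hb)
    rw [hab, sub_self] at hdiff
    simpa only [hF, Pi.sub_apply, smul_sub] using hdiff
  have hF_summable : Summable fun s => ‖(δ / 2) ^ s • F s‖ := by
    obtain ⟨ha, hb, -⟩ := h (δ / 2) ⟨by positivity, by linarith⟩
    refine ((summable_norm_rpow_smul_extend hm.injective ha).add
      (summable_norm_rpow_smul_extend hn.injective hb)).of_nonneg_of_le (fun _ => norm_nonneg _)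
      fun s => ?_
    rw [hF, Pi.sub_apply, smul_sub]
    exact norm_sub_le _ _
  have hF_wf : (support F).IsWF :=
    (hm.monotone.isWF_range.union hn.monotone.isWF_range).subset
      ((support_sub _ _).trans (union_subset_union
        (support_subset_iff'.2 (extend_apply' _ _)) (support_subset_iff'.2 (extend_apply' _ _))))
  exact sub_eq_zero.1 <| eq_zero_of_tsum_rpow_smul_eq_zero (half_pos hδ) hF_wf hF_summable
    (eventually_of_mem (Ioo_mem_nhdsGT hδ) fun r hr => (hF_series r hr).tsum_eq)

theorem mul_ofReal_cpow_eq_rpow_smul {r : ℝ} (hr : 0 ≤ r) (c : ℂ) (μ : ℝ) :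
    c * (r : ℂ) ^ (μ : ℂ) = r ^ μ • c := by
  rw [← Complex.ofReal_cpow hr, Complex.real_smul, mul_comm]

theorem residue_well_defined_14_5 (δ : ℝ) (hδ : 0 < δ)
    (m n : ℕ → ℝ) (hm : StrictMono m) (hn : StrictMono n)
    (a b : ℕ → ℂ)
    (h : ∀ z : ℂ, 0 < ‖z‖ → ‖z‖ < δ →
      Summable (fun i : ℕ => ‖a i * z ^ ((m i : ℝ) : ℂ)‖) ∧
      Summable (fun j : ℕ => ‖b j * z ^ ((n j : ℝ) : ℂ)‖) ∧
      ∑' i : ℕ, a i * z ^ ((m i : ℝ) : ℂ) = ∑' j : ℕ, b j * z ^ ((n j : ℝ) : ℂ))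
    (i₀ : ℕ) (hi₀ : m i₀ = -1) :
    (∀ j₀ : ℕ, n j₀ = -1 → a i₀ = b j₀) ∧ ((∀ j : ℕ, n j ≠ -1) → a i₀ = 0) := by
  have hreal : ∀ r ∈ Ioo 0 δ, Summable (fun i => ‖r ^ m i • a i‖) ∧
      Summable (fun j => ‖r ^ n j • b j‖) ∧ ∑' i, r ^ m i • a i = ∑' j, r ^ n j • b j := by
    rintro r ⟨hr, hrδ⟩
    have hnorm : ‖(r : ℂ)‖ = r := by simp [hr.le]
    simpa only [mul_ofReal_cpow_eq_rpow_smul hr.le] using h r (by rwa [hnorm]) (by rwa [hnorm])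
  have hcoeff := congrFun (extend_eq_extend_of_tsum_rpow_smul_eq hm hn hδ hreal) (-1)
  rw [← hi₀, hm.injective.extend_apply] at hcoeff
  refine ⟨fun j₀ hj₀ => ?_, fun hno => ?_⟩
  · rwa [hi₀, ← hj₀, hn.injective.extend_apply] at hcoeff
  · rwa [hi₀, extend_apply' _ _ _ fun ⟨j, hj⟩ => hno j hj] at hcoeff
end
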